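/- Let n ≥ 2, 0 < λ ≤ Λ < ∞, and α ∈ (0,1). Then for every A ∈ 𝒜(λ,Λ) there exists Q ∈ O(n) such that trace{ J_α (2A − 2 A^{1/2} Q A^{1/2}) } ≤ −4(1−α)λ; in particular, the minimum over Q ∈ O(n) of this trace is at most −4(1−α)λ, and hence is strictly negative independently of the ellipticity constants. -/

import Mathlib

open MeasureTheory Matrix

noncomputable section

abbrev EucSp (n : ℕ) := EuclideanSpace ℝ (Fin n)

/-- Principal square root of a positive semidefinite matrix (zero otherwise). -/
noncomputable def msqrt {n : ℕ} (A : Matrix (Fin n) (Fin n) ℝ) : Matrix (Fin n) (Fin n) ℝ :=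
  open scoped Classical in
  if h : A.PosSemidef then
    (h.1.eigenvectorUnitary : Matrix (Fin n) (Fin n) ℝ) *
      Matrix.diagonal (fun i => Real.sqrt (h.1.eigenvalues i)) *
      (star h.1.eigenvectorUnitary : Matrix (Fin n) (Fin n) ℝ)
  else 0

/-- `A ∈ 𝒜(λ,Λ)`: symmetric and uniformly elliptic. -/
def UnifElliptic {n : ℕ} (lam Lam : ℝ) (A : Matrix (Fin n) (Fin n) ℝ) : Prop :=
  A.IsSymm ∧ ∀ ξ : Fin n → ℝ,
    lam * (ξ ⬝ᵥ ξ) ≤ ξ ⬝ᵥ A.mulVec ξ ∧ ξ ⬝ᵥ A.mulVec ξ ≤ Lam * (ξ ⬝ᵥ ξ)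

/-- Membership in the orthogonal group `O(n)`. -/
def IsOrthMat {n : ℕ} (Q : Matrix (Fin n) (Fin n) ℝ) : Prop :=
  Q * Qᵀ = 1 ∧ Qᵀ * Q = 1

/-- Matrix acting on Euclidean space. -/
noncomputable def mvE {n : ℕ} (M : Matrix (Fin n) (Fin n) ℝ) (y : EucSp n) : EucSp n :=
  (EuclideanSpace.equiv (Fin n) ℝ).symm (M.mulVec ((EuclideanSpace.equiv (Fin n) ℝ) y))

/-- The ellipsoid `x + ε A^{1/2} 𝔹`. -/
noncomputable def ellipsoid {n : ℕ} (ε : ℝ) (M : Matrix (Fin n) (Fin n) ℝ) (x : EucSp n) :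
    Set (EucSp n) :=
  (fun y => x + ε • mvE (msqrt M) y) '' Metric.ball (0 : EucSp n) 1

/-- The matrix `J_α = diag(α-1, 1, …, 1)`. -/
noncomputable def Jmat (n : ℕ) (α : ℝ) : Matrix (Fin n) (Fin n) ℝ :=
  Matrix.diagonal (fun i => if (i : ℕ) = 0 then α - 1 else 1)

/-- Reflection in the first coordinate axis. -/
noncomputable def J0 (n : ℕ) : Matrix (Fin n) (Fin n) ℝ :=
  Matrix.diagonal (fun i => if (i : ℕ) = 0 then -1 else 1)

/-- The first standard basis vector `e₁`. -/
noncomputable def e1 (n : ℕ) : EucSp n :=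
  (EuclideanSpace.equiv (Fin n) ℝ).symm (fun i => if (i : ℕ) = 0 then 1 else 0)

/-- `f₁(x,z) = C|x-z|^α + C̃|x+z|²`. -/
noncomputable def f1 {n : ℕ} (α C Ct : ℝ) (x z : EucSp n) : ℝ :=
  C * ‖x - z‖ ^ α + Ct * ‖x + z‖ ^ 2

/-- The annular step function `f₂`. -/
noncomputable def f2 {n : ℕ} (α C lam ε : ℝ) (N : ℕ) (x z : EucSp n) : ℝ :=
  if ‖x - z‖ / (Real.sqrt lam * ε) > (N : ℝ) then 0
  else C ^ (2 * (2 * N - ⌈2 * ‖x - z‖ / (Real.sqrt lam * ε)⌉₊)) * ε ^ α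

/-!
With `S = A^{1/2}` and `e = e₁`, let `Q` be the reflection in the hyperplane orthogonal to
`u = S⁻¹ e`. Then `S Q S = A - (2 / |u|²) e eᵀ`, so the trace equals `4 (α - 1) / |u|²`,
and `|u|² ≤ 1 / λ` because `1 = |S u|² = uᵀ A u ≥ λ |u|²`.
-/

namespace Matrix

variable {ι K : Type*} [Fintype ι]

lemma IsSymm.dotProduct_mul_self_mulVec {R : Type*} [CommSemiring R] {S : Matrix ι ι R}
    (hS : S.IsSymm) (u : ι → R) :
    u ⬝ᵥ (S * S) *ᵥ u = (S *ᵥ u) ⬝ᵥ (S *ᵥ u) := by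
  rw [← mulVec_mulVec, dotProduct_mulVec, ← mulVec_transpose, hS.eq]

variable [DecidableEq ι] [Field K]

def householder (u : ι → K) : Matrix ι ι K :=
  1 - (2 / (u ⬝ᵥ u)) • vecMulVec u u

lemma householder_transpose (u : ι → K) : (householder u)ᵀ = householder u := by
  simp [householder, transpose_sub, transpose_smul, transpose_vecMulVec]

lemma householder_mul_self {u : ι → K} (hu : u ⬝ᵥ u ≠ 0) :
    householder u * householder u = 1 := by
  simp only [householder, sub_mul, mul_sub, one_mul, mul_one, smul_mul_smul_comm,
    vecMulVec_mul_vecMulVec, vecMulVec_smul, smul_smul]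
  have : 2 / (u ⬝ᵥ u) * (2 / (u ⬝ᵥ u)) * (u ⬝ᵥ u) = 2 / (u ⬝ᵥ u) + 2 / (u ⬝ᵥ u) := by
    field_simp; ring
  rw [this, add_smul]
  abel

lemma IsSymm.mul_householder_mul {S : Matrix ι ι K} (hS : S.IsSymm) (u : ι → K) :
    S * householder u * S = S * S - (2 / (u ⬝ᵥ u)) • vecMulVec (S *ᵥ u) (S *ᵥ u) := by
  rw [householder, mul_sub, sub_mul, mul_one, Matrix.mul_smul, Matrix.smul_mul, mul_vecMulVec, vecMulVec_mul,
    ← mulVec_transpose, hS.eq]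

end Matrix

lemma isOrthMat_householder {n : ℕ} {u : Fin n → ℝ} (hu : u ⬝ᵥ u ≠ 0) :
    IsOrthMat (householder u) := by
  rw [IsOrthMat, householder_transpose, householder_mul_self hu]
  exact ⟨rfl, rfl⟩

lemma trace_Jmat_mul_vecMulVec_single {n : ℕ} (α : ℝ) (i : Fin n) (hi : (i : ℕ) = 0) :
    trace (Jmat n α * vecMulVec (Pi.single i 1) (Pi.single i 1)) = α - 1 := by
  simp [Jmat, mul_vecMulVec, hi]

lemma msqrt_eq_cfc {n : ℕ} {A : Matrix (Fin n) (Fin n) ℝ} (hA : A.PosSemidef) :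
    msqrt A = cfc Real.sqrt A := by
  rw [msqrt, dif_pos hA, hA.1.cfc_eq]
  rfl

lemma msqrt_mul_self {n : ℕ} {A : Matrix (Fin n) (Fin n) ℝ} (hA : A.PosSemidef) :
    msqrt A * msqrt A = A := by
  rw [msqrt_eq_cfc hA, ← cfc_mul _ _ A]
  conv_rhs => rw [← cfc_id' ℝ A hA.1.isSelfAdjoint]
  refine cfc_congr fun x hx => ?_
  rw [hA.1.spectrum_real_eq_range_eigenvalues] at hx
  obtain ⟨i, rfl⟩ := hx
  exact Real.mul_self_sqrt (hA.eigenvalues_nonneg i)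

lemma msqrt_isSymm {n : ℕ} {A : Matrix (Fin n) (Fin n) ℝ} (hA : A.PosSemidef) :
    (msqrt A).IsSymm := by
  rw [msqrt_eq_cfc hA, ← isHermitian_iff_isSymm]
  exact cfc_predicate _ _

lemma UnifElliptic.posDef {n : ℕ} {lam Lam : ℝ} {A : Matrix (Fin n) (Fin n) ℝ}
    (hA : UnifElliptic lam Lam A) (hlam : 0 < lam) : A.PosDef := by
  refine .of_dotProduct_mulVec_pos (isHermitian_iff_isSymm.2 hA.1) fun x hx => ?_
  have hxx : 0 < x ⬝ᵥ x := (dotProduct_self_star_pos_iff.2 hx :)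
  simpa using (mul_pos hlam hxx).trans_le (hA.2 x).1

theorem stmt8_general {n : ℕ} (hn : 2 ≤ n)
    (lam Lam : ℝ) (hlam : 0 < lam)
    (α : ℝ) (hα : α ∈ Set.Ioo (0 : ℝ) 1) :
    ∀ A : Matrix (Fin n) (Fin n) ℝ, UnifElliptic lam Lam A →
      ∃ Q, IsOrthMat Q ∧
        Matrix.trace (Jmat n α *
            ((2 : ℝ) • A - (2 : ℝ) • (msqrt A * Q * msqrt A))) ≤
          -(4 * (1 - α) * lam) := by
  intro A hA
  have hPD := hA.posDef hlam
  set S := msqrt A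
  have hSS : S * S = A := msqrt_mul_self hPD.posSemidef
  have hS : S.IsSymm := msqrt_isSymm hPD.posSemidef
  set e : Fin n → ℝ := Pi.single ⟨0, by omega⟩ 1
  obtain ⟨w, hw⟩ := mulVec_surjective_iff_isUnit.2 hPD.isUnit e
  set u := S *ᵥ w
  have hSu : S *ᵥ u = e := by rw [mulVec_mulVec, hSS, hw]
  have hu : 0 < u ⬝ᵥ u := by
    refine dotProduct_self_star_pos_iff.2 fun h => ?_
    rw [h, mulVec_zero] at hSu
    exact Pi.single_ne_zero_iff.2 one_ne_zero hSu.symm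
  have hlamu : lam * (u ⬝ᵥ u) ≤ 1 := by
    have h := (hA.2 u).1
    rw [← hSS, hS.dotProduct_mul_self_mulVec, hSu] at h
    simpa [e] using h
  have htrace : trace (Jmat n α * ((2 : ℝ) • A - (2 : ℝ) • (S * householder u * S))) =
      4 * (α - 1) / (u ⬝ᵥ u) := by
    rw [hS.mul_householder_mul, hSS, hSu,
      show (2 : ℝ) • A - (2 : ℝ) • (A - (2 / (u ⬝ᵥ u)) • vecMulVec e e) =
        (4 / (u ⬝ᵥ u)) • vecMulVec e e by module,
      Matrix.mul_smul, trace_smul, trace_Jmat_mul_vecMulVec_single α _ rfl, smul_eq_mul]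
    ring
  refine ⟨householder u, isOrthMat_householder hu.ne', ?_⟩
  rw [htrace, div_le_iff₀ hu]
  nlinarith [hα.2]

/-- negativity of the optimal coupling trace in the constant
coefficient case (inequality (4.18)). -/
theorem stmt8 {n : ℕ} (hn : 2 ≤ n)
    (lam Lam : ℝ) (hlam : 0 < lam) (hlL : lam ≤ Lam)
    (α : ℝ) (hα : α ∈ Set.Ioo (0 : ℝ) 1) :
    ∀ A : Matrix (Fin n) (Fin n) ℝ, UnifElliptic lam Lam A →
      ∃ Q, IsOrthMat Q ∧
        Matrix.trace (Jmat n α *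
            ((2 : ℝ) • A - (2 : ℝ) • (msqrt A * Q * msqrt A))) ≤
          -(4 * (1 - α) * lam) :=
  stmt8_general hn lam Lam hlam α hα

end
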